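/- arXiv:0708.2439 — 7 statements merged into one kernel-verified Lean document; each statement's English description precedes it below -/
import Mathlib

section
/- Let p be a prime, s ≥ 1, and let y, ȳ be integers coprime to p with y ≡ ȳ (mod p^s). Then for all n ≥ 1, the partial sums G_n(y) = Σ_{j=1}^n y^j/j and G_n(ȳ) = Σ_{j=1}^n ȳ^j/j (viewed as p-adic numbers) satisfy G_n(y) ≡ G_n(ȳ) (mod p^s). -/
/-!
If `p ^ s ∣ y - ȳ` with `s ≥ 1`, raising to the `p`-th power gains one factor of `p`
(the cofactor `∑ yⁱ ȳ^(p-1-i)` is `≡ p ȳ^(p-1) ≡ 0 mod p`). Hence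
`p ^ (s + v_p(j)) ∣ y ^ j - ȳ ^ j`, which exactly compensates the denominator `j`
in each term of `G_n(y) - G_n(ȳ)`; the ultrametric inequality finishes the proof.
-/

section LiftingTheExponent

variable {R : Type*} [CommRing R] {p k : ℕ} {a b : R}

theorem pow_succ_dvd_pow_sub_pow_of_pow_dvd_sub (hk : k ≠ 0) (h : (p : R) ^ k ∣ a - b) :
    (p : R) ^ (k + 1) ∣ a ^ p - b ^ p := by
  rw [← geom_sum₂_mul, pow_succ']
  exact mul_dvd_mul (dvd_geom_sum₂_self ((dvd_pow_self _ hk).trans h)) h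

theorem pow_add_dvd_pow_pow_sub_pow_pow_of_pow_dvd_sub (hk : k ≠ 0) (h : (p : R) ^ k ∣ a - b)
    (t : ℕ) : (p : R) ^ (k + t) ∣ a ^ p ^ t - b ^ p ^ t := by
  induction t with
  | zero => simpa using h
  | succ t ih =>
    rw [← add_assoc, pow_succ p t, pow_mul, pow_mul]
    exact pow_succ_dvd_pow_sub_pow_of_pow_dvd_sub (by omega) ih

theorem pow_add_padicValNat_dvd_pow_sub_pow_of_pow_dvd_sub (hk : k ≠ 0)
    (h : (p : R) ^ k ∣ a - b) (j : ℕ) : (p : R) ^ (k + padicValNat p j) ∣ a ^ j - b ^ j := by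
  obtain ⟨m, hm⟩ := pow_padicValNat_dvd (p := p) (n := j)
  conv_rhs => rw [hm, pow_mul, pow_mul]
  exact (pow_add_dvd_pow_pow_sub_pow_pow_of_pow_dvd_sub hk h _).trans (sub_dvd_pow_sub_pow _ _ m)

end LiftingTheExponent

namespace Padic

variable {p : ℕ} [Fact p.Prime]

theorem norm_natCast_eq_zpow_neg_padicValNat {j : ℕ} (hj : j ≠ 0) :
    ‖(j : ℚ_[p])‖ = (p : ℝ) ^ (-(padicValNat p j : ℤ)) := by
  rw [norm_eq_zpow_neg_valuation (Nat.cast_ne_zero.mpr hj), valuation_natCast]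

theorem norm_pow_sub_pow_div_le_of_pow_dvd_sub {s : ℕ} (hs : s ≠ 0) {a b : ℤ}
    (h : (p : ℤ) ^ s ∣ a - b) {j : ℕ} (hj : j ≠ 0) :
    ‖((a : ℚ_[p]) ^ j - (b : ℚ_[p]) ^ j) / j‖ ≤ (p : ℝ) ^ (-(s : ℤ)) := by
  have hnum : ‖(a : ℚ_[p]) ^ j - (b : ℚ_[p]) ^ j‖ ≤
      (p : ℝ) ^ (-(s : ℤ) + -(padicValNat p j : ℤ)) := by
    simpa only [Int.cast_sub, Int.cast_pow, Nat.cast_add, neg_add] using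
      (norm_int_le_pow_iff_dvd _ _).mpr (pow_add_padicValNat_dvd_pow_sub_pow_of_pow_dvd_sub hs h j)
  have hp : (p : ℝ) ≠ 0 := by exact_mod_cast (Fact.out : p.Prime).ne_zero
  rwa [norm_div, norm_natCast_eq_zpow_neg_padicValNat hj, div_le_iff₀ (by positivity),
    ← zpow_add₀ hp]

end Padic

theorem Gn_congruent_mod_pow_general (p : ℕ) [Fact p.Prime] (s : ℕ) (hs : 1 ≤ s)
    (y ybar : ℤ)
    (hcong : y ≡ ybar [ZMOD (p : ℕ) ^ s]) :
    ∀ n : ℕ, 1 ≤ n →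
      ‖((((∑ j ∈ Finset.Icc 1 n, (y : ℚ) ^ j / j) -
          (∑ j ∈ Finset.Icc 1 n, (ybar : ℚ) ^ j / j)) : ℚ) : ℚ_[p])‖ ≤ (p : ℝ) ^ (-(s : ℤ)) := by
  intro n _
  rw [← Finset.sum_sub_distrib]
  push_cast
  refine IsUltrametricDist.norm_sum_le_of_forall_le_of_nonneg (by positivity) fun j hj => ?_
  rw [div_sub_div_same]
  exact Padic.norm_pow_sub_pow_div_le_of_pow_dvd_sub (by omega) hcong.symm.dvd
    (Nat.one_le_iff_ne_zero.mp (Finset.mem_Icc.mp hj).1)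

theorem Gn_congruent_mod_pow (p : ℕ) [Fact p.Prime] (s : ℕ) (hs : 1 ≤ s)
    (y ybar : ℤ) (hy : IsCoprime y (p : ℤ)) (hybar : IsCoprime ybar (p : ℤ))
    (hcong : y ≡ ybar [ZMOD (p : ℕ) ^ s]) :
    ∀ n : ℕ, 1 ≤ n →
      ‖((((∑ j ∈ Finset.Icc 1 n, (y : ℚ) ^ j / j) -
          (∑ j ∈ Finset.Icc 1 n, (ybar : ℚ) ^ j / j)) : ℚ) : ℚ_[p])‖ ≤ (p : ℝ) ^ (-(s : ℤ)) :=
  Gn_congruent_mod_pow_general p s hs y ybar hcong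
end

section
/- Let p be a prime and y an integer coprime to p. Then for all n ≥ 1, ν_p(G_n(y^(p²)) − G_n(y^p)) ≥ 2, where G_n(x) = Σ_{j=1}^n x^j/j. -/
/-!
Fermat gives `p ∣ y ^ p - y`, hence `p² ∣ y ^ (p²) - y ^ p`. If `p ^ c ∣ a - b` with `c ≥ 1`,
then `a ^ p - b ^ p = (a - b) · Σ aⁱ bᵖ⁻¹⁻ⁱ` and the geometric sum is `≡ p bᵖ⁻¹ ≡ 0 (mod p)`,
so raising to the `p`-th power gains one factor of `p`. Consequently the numerator of
`(y ^ (p²)) ^ j / j - (y ^ p) ^ j / j` is divisible by `p ^ (2 + ν_p(j))`, every term has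
`p`-adic norm at most `p⁻²`, and the ultrametric inequality bounds the whole sum.
-/

section PowSubPow

variable {R : Type*} [CommRing R] {p c : ℕ} {a b : R}

theorem pow_succ_dvd_pow_sub_pow (h : (p : R) ^ c ∣ a - b) (hc : c ≠ 0) :
    (p : R) ^ (c + 1) ∣ a ^ p - b ^ p := by
  rw [← geom_sum₂_mul, pow_succ']
  exact mul_dvd_mul (dvd_geom_sum₂_self ((dvd_pow_self _ hc).trans h)) h

theorem pow_add_dvd_pow_pow_sub_pow_pow (h : (p : R) ^ c ∣ a - b) (hc : c ≠ 0) (k : ℕ) :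
    (p : R) ^ (c + k) ∣ a ^ p ^ k - b ^ p ^ k := by
  induction k with
  | zero => simpa using h
  | succ k ih =>
    rw [pow_succ, pow_mul, pow_mul, ← add_assoc]
    exact pow_succ_dvd_pow_sub_pow ih (by omega)

theorem pow_add_dvd_pow_sub_pow_of_pow_dvd (h : (p : R) ^ c ∣ a - b) (hc : c ≠ 0) {k j : ℕ}
    (hk : p ^ k ∣ j) : (p : R) ^ (c + k) ∣ a ^ j - b ^ j := by
  obtain ⟨m, rfl⟩ := hk
  rw [pow_mul, pow_mul]
  exact (pow_add_dvd_pow_pow_sub_pow_pow h hc k).trans (sub_dvd_pow_sub_pow _ _ m)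

end PowSubPow

theorem Int.sq_dvd_pow_sq_sub_pow (p : ℕ) [Fact p.Prime] (y : ℤ) :
    (p : ℤ) ^ 2 ∣ y ^ p ^ 2 - y ^ p := by
  have fermat : (p : ℤ) ∣ y ^ p - y := by
    rw [← ZMod.intCast_zmod_eq_zero_iff_dvd]
    push_cast
    rw [ZMod.pow_card, sub_self]
  rw [sq p, pow_mul']
  exact pow_succ_dvd_pow_sub_pow (c := 1) (by simpa using fermat) one_ne_zero

theorem Padic.norm_intCast_div_natCast_le {p : ℕ} [Fact p.Prime] {N : ℤ} {j c : ℕ} (hj : j ≠ 0)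
    (h : (p : ℤ) ^ (c + padicValNat p j) ∣ N) :
    ‖(N : ℚ_[p]) / j‖ ≤ (p : ℝ) ^ (-c : ℤ) := by
  have hp : (0 : ℝ) < p := by exact_mod_cast (Fact.out : p.Prime).pos
  rw [norm_div, Padic.norm_eq_zpow_neg_valuation (x := (j : ℚ_[p])) (by exact_mod_cast hj), Padic.valuation_natCast,
    div_le_iff₀ (zpow_pos hp _), ← zpow_add₀ hp.ne']
  have hN := (Padic.norm_int_le_pow_iff_dvd N _).mpr h
  rwa [Nat.cast_add, neg_add] at hN

theorem Gn_yp2_sub_yp_general (p : ℕ) [Fact p.Prime] (y : ℤ) :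
    ∀ n : ℕ, 1 ≤ n →
      ‖((((∑ j ∈ Finset.Icc 1 n, ((y : ℚ) ^ (p ^ 2)) ^ j / j) -
          (∑ j ∈ Finset.Icc 1 n, ((y : ℚ) ^ p) ^ j / j)) : ℚ) : ℚ_[p])‖ ≤ (p : ℝ) ^ (-2 : ℤ) := by
  intro n _
  rw [← Finset.sum_sub_distrib, Rat.cast_sum]
  refine IsUltrametricDist.norm_sum_le_of_forall_le_of_nonneg (by positivity) fun j hj => ?_
  have hj0 : j ≠ 0 := by have := (Finset.mem_Icc.mp hj).1; omega
  have numerator_dvd : (p : ℤ) ^ (2 + padicValNat p j) ∣ (y ^ p ^ 2) ^ j - (y ^ p) ^ j :=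
    pow_add_dvd_pow_sub_pow_of_pow_dvd (Int.sq_dvd_pow_sq_sub_pow p y) two_ne_zero
      pow_padicValNat_dvd
  have term_eq : ((((y : ℚ) ^ p ^ 2) ^ j / j - ((y : ℚ) ^ p) ^ j / j : ℚ) : ℚ_[p]) =
      (((y ^ p ^ 2) ^ j - (y ^ p) ^ j : ℤ) : ℚ_[p]) / j := by
    push_cast
    ring
  exact term_eq ▸ Padic.norm_intCast_div_natCast_le hj0 numerator_dvd

theorem Gn_yp2_sub_yp (p : ℕ) [Fact p.Prime] (y : ℤ) (hy : IsCoprime y (p : ℤ)) :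
    ∀ n : ℕ, 1 ≤ n →
      ‖((((∑ j ∈ Finset.Icc 1 n, ((y : ℚ) ^ (p ^ 2)) ^ j / j) -
          (∑ j ∈ Finset.Icc 1 n, ((y : ℚ) ^ p) ^ j / j)) : ℚ) : ℚ_[p])‖ ≤ (p : ℝ) ^ (-2 : ℤ) :=
  Gn_yp2_sub_yp_general p y
end

section
/- Let p be an odd prime, y an integer coprime to p with y ≢ 1 (mod p), n ≥ 0, and k ∈ {0, 1, …, p−1}. Then G_{pn+k}(y^p) ≡ G_n(y^p)/p + y^n · G_k(y) + ((y^n − 1)/(y − 1)) · G_{p−1}(y) (mod p), where G_m(x) = Σ_{j=1}^m x^j/j. -/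
/-!
Split `1, …, pn + k` into the multiples `j = p i` (`i ≤ n`), the blocks `j = p q + r` with
`q < n`, `1 ≤ r ≤ p - 1`, and the tail `j = p n + r` with `r ≤ k`. The multiples of `p` give
`G_n(y^p)/p` because `p^{s+2} ∣ y^{p²i} - y^{pi}` when `p^s ∥ i` (Fermat plus lifting the
exponent), which beats the denominator `p i`. For `j = pq + r` Fermat gives
`y^{pj}/j ≡ y^q · y^r/r`; summed over `q < n` this is `((y^n - 1)/(y - 1)) · G_{p-1}(y)` and the
tail gives `y^n · G_k(y)`.
-/

open Finset

namespace Finset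

variable {M : Type*} [AddCommMonoid M]

theorem sum_Icc_one_add (F : ℕ → M) (m t : ℕ) :
    ∑ j ∈ Icc 1 (m + t), F j = ∑ j ∈ Icc 1 m, F j + ∑ r ∈ Icc 1 t, F (m + r) := by
  have hIoc : ∀ x, Icc 1 x = Ioc 0 x := Icc_add_one_left_eq_Ioc 0
  have hshift : Ioc m (m + t) = (Ioc 0 t).map (addLeftEmbedding m) := by simp
  rw [hIoc, hIoc, hIoc, ← sum_Ioc_consecutive F (Nat.zero_le m) (Nat.le_add_right m t), hshift,
    sum_map]
  rfl

theorem sum_Icc_one_mul (F : ℕ → M) (p n : ℕ) :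
    ∑ j ∈ Icc 1 (p * n), F j = ∑ q ∈ range n, ∑ r ∈ Icc 1 p, F (p * q + r) := by
  induction n with
  | zero => simp
  | succ n ih => rw [mul_add_one, sum_Icc_one_add, ih, sum_range_succ]

theorem sum_Icc_one_eq_sum_range (F : ℕ → M) (n : ℕ) :
    ∑ j ∈ Icc 1 n, F j = ∑ q ∈ range n, F (q + 1) := by
  rw [range_eq_Ico, sum_Ico_add' F, zero_add, Ico_add_one_right_eq_Icc]

theorem sum_Icc_one_mul_add {p : ℕ} (hp : 0 < p) (F : ℕ → M) (n k : ℕ) :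
    ∑ j ∈ Icc 1 (p * n + k), F j =
      ∑ i ∈ Icc 1 n, F (p * i) + ∑ q ∈ range n, ∑ r ∈ Icc 1 (p - 1), F (p * q + r) +
        ∑ r ∈ Icc 1 k, F (p * n + r) := by
  have hblock : ∀ q, ∑ r ∈ Icc 1 p, F (p * q + r) =
      ∑ r ∈ Icc 1 (p - 1), F (p * q + r) + F (p * (q + 1)) := by
    intro q
    obtain ⟨p', rfl⟩ : ∃ p', p = p' + 1 := ⟨p - 1, by omega⟩
    simp [sum_Icc_one_add _ p' 1, mul_add_one]
  rw [sum_Icc_one_add, sum_Icc_one_mul, sum_congr rfl fun q _ => hblock q, sum_add_distrib,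
    sum_Icc_one_eq_sum_range (fun i => F (p * i)), add_comm (∑ q ∈ range n, _)]

end Finset

section Padic

variable {p : ℕ} [hp : Fact p.Prime]

theorem Int.pow_prime_mul_modEq (y : ℤ) (m : ℕ) : y ^ (p * m) ≡ y ^ m [ZMOD p] := by
  rw [← ZMod.intCast_eq_intCast_iff]
  push_cast
  rw [pow_mul, ZMod.pow_card]

theorem Int.prime_pow_succ_dvd_pow_sub_pow (z : ℤ) (s : ℕ) :
    (p : ℤ) ^ (s + 1) ∣ z ^ p ^ (s + 1) - z ^ p ^ s := by
  have hfermat : (p : ℤ) ∣ z ^ p - z :=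
    (pow_prime_mul_modEq (p := p) z 1).symm.dvd.trans (by simp)
  simpa [← pow_mul, pow_succ'] using dvd_sub_pow_of_dvd_sub hfermat s

theorem Padic.norm_intCast_div_le_inv {a b : ℤ} (ha : (p : ℤ) ∣ a) (hb : ¬ (p : ℤ) ∣ b) :
    ‖((a / b : ℚ) : ℚ_[p])‖ ≤ (p : ℝ) ^ (-1 : ℤ) := by
  have hb1 : ‖(b : ℚ_[p])‖ = 1 :=
    le_antisymm (norm_int_le_one b) (not_lt.mp (mt norm_intCast_lt_one_iff.mp hb))
  rw [Rat.cast_div, Rat.cast_intCast, Rat.cast_intCast, norm_div, hb1, div_one]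
  simpa using (norm_int_le_pow_iff_dvd a 1).mpr (by simpa using ha)

theorem Padic.norm_div_sub_div_le_inv {a b a' b' : ℤ} (ha : a ≡ a' [ZMOD p])
    (hb : b ≡ b' [ZMOD p]) (hb0 : ¬ (p : ℤ) ∣ b) :
    ‖((a / b - a' / b' : ℚ) : ℚ_[p])‖ ≤ (p : ℝ) ^ (-1 : ℤ) := by
  have hpZ : Prime (p : ℤ) := Nat.prime_iff_prime_int.mp hp.out
  have hb0' : ¬ (p : ℤ) ∣ b' := fun h => hb0 (hb.dvd_iff.mpr h)
  have hbQ : (b : ℚ) ≠ 0 := Int.cast_ne_zero.mpr (by rintro rfl; exact hb0 (dvd_zero _))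
  have hbQ' : (b' : ℚ) ≠ 0 := Int.cast_ne_zero.mpr (by rintro rfl; exact hb0' (dvd_zero _))
  have hsub : (a / b - a' / b' : ℚ) =
      ((a * b' - a' * b : ℤ) : ℚ) / ((b * b' : ℤ) : ℚ) := by
    push_cast
    field_simp
  rw [hsub]
  refine norm_intCast_div_le_inv ?_ fun h => (hpZ.dvd_or_dvd h).elim hb0 hb0'
  exact dvd_neg.mp (by simpa using (ha.mul hb.symm).dvd)

theorem Padic.norm_pow_prime_mul_div_sub_le_inv (y : ℤ) {i : ℕ} (hi : i ≠ 0) :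
    ‖((((y : ℚ) ^ p) ^ (p * i) / ((p * i : ℕ) : ℚ)
      - ((y : ℚ) ^ p) ^ i / ((i : ℚ) * (p : ℚ)) : ℚ) : ℚ_[p])‖
      ≤ (p : ℝ) ^ (-1 : ℤ) := by
  obtain ⟨s, u, hu, rfl⟩ := Nat.exists_eq_pow_mul_and_not_dvd hi p hp.out.ne_one
  obtain ⟨c, hc⟩ := Int.prime_pow_succ_dvd_pow_sub_pow (p := p) (y ^ u) (s + 1)
  have hpQ : (p : ℚ) ≠ 0 := by exact_mod_cast hp.out.ne_zero
  have huQ : (u : ℚ) ≠ 0 := Nat.cast_ne_zero.mpr (by rintro rfl; exact hu (dvd_zero p))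
  have hcQ : (y : ℚ) ^ (p ^ (s + 1 + 1) * u) - (y : ℚ) ^ (p ^ (s + 1) * u)
      = (p : ℚ) ^ (s + 1 + 1) * c := by
    simp only [mul_comm _ u, pow_mul]
    exact_mod_cast hc
  have key : ((y : ℚ) ^ p) ^ (p * (p ^ s * u)) / ((p * (p ^ s * u) : ℕ) : ℚ)
      - ((y : ℚ) ^ p) ^ (p ^ s * u) / (((p ^ s * u : ℕ) : ℚ) * (p : ℚ))
      = ((p * c : ℤ) : ℚ) / ((u : ℤ) : ℚ) := by
    rw [← pow_mul, ← pow_mul, show p * (p * (p ^ s * u)) = p ^ (s + 1 + 1) * u by ring,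
      show p * (p ^ s * u) = p ^ (s + 1) * u by ring]
    push_cast
    field_simp
    linear_combination (p : ℚ) ^ (s + 1) * hcQ
  rw [key]
  exact norm_intCast_div_le_inv (dvd_mul_right _ _) (by exact_mod_cast hu)

theorem Padic.norm_pow_prime_div_sub_le_inv (y : ℤ) (q : ℕ) {r : ℕ} (hr : ¬ p ∣ r) :
    ‖((((y : ℚ) ^ p) ^ (p * q + r) / ((p * q + r : ℕ) : ℚ)
      - (y : ℚ) ^ q * ((y : ℚ) ^ r / r) : ℚ) : ℚ_[p])‖ ≤ (p : ℝ) ^ (-1 : ℤ) := by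
  have hnum : y ^ (p * (p * q + r)) ≡ y ^ (q + r) [ZMOD p] := by
    refine (Int.pow_prime_mul_modEq y _).trans ?_
    rw [pow_add, pow_add]
    exact (Int.pow_prime_mul_modEq y q).mul_right _
  have hden : ((p * q + r : ℕ) : ℤ) ≡ (r : ℤ) [ZMOD p] := by
    simp [Int.ModEq]
  have hexpr : ((y : ℚ) ^ p) ^ (p * q + r) / ((p * q + r : ℕ) : ℚ)
      - (y : ℚ) ^ q * ((y : ℚ) ^ r / r)
      = ((y ^ (p * (p * q + r)) : ℤ) : ℚ) / (((p * q + r : ℕ) : ℤ) : ℚ)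
        - ((y ^ (q + r) : ℤ) : ℚ) / ((r : ℤ) : ℚ) := by
    push_cast
    ring
  rw [hexpr]
  exact norm_div_sub_div_le_inv hnum hden
    fun h => hr (Int.natCast_dvd_natCast.mp (hden.dvd_iff.mp h))

theorem Padic.norm_ratCast_sum_le_inv {ι : Type*} {s : Finset ι} {f : ι → ℚ}
    (hf : ∀ i ∈ s, ‖(f i : ℚ_[p])‖ ≤ (p : ℝ) ^ (-1 : ℤ)) :
    ‖((∑ i ∈ s, f i : ℚ) : ℚ_[p])‖ ≤ (p : ℝ) ^ (-1 : ℤ) := by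
  rw [Rat.cast_sum]
  exact IsUltrametricDist.norm_sum_le_of_forall_le_of_nonneg (by positivity) hf

theorem Padic.norm_ratCast_add_le_inv {a b : ℚ}
    (ha : ‖(a : ℚ_[p])‖ ≤ (p : ℝ) ^ (-1 : ℤ))
    (hb : ‖(b : ℚ_[p])‖ ≤ (p : ℝ) ^ (-1 : ℤ)) :
    ‖((a + b : ℚ) : ℚ_[p])‖ ≤ (p : ℝ) ^ (-1 : ℤ) := by
  rw [Rat.cast_add]
  exact (nonarchimedean _ _).trans (max_le ha hb)

end Padic

theorem Gn_recurrence_general (p : ℕ) [Fact p.Prime] (y : ℤ)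
    (hy1 : ¬ y ≡ 1 [ZMOD p]) (n k : ℕ) (hk : k ≤ p - 1) :
    ‖((((∑ j ∈ Finset.Icc 1 (p * n + k), ((y : ℚ) ^ p) ^ j / j) -
        ((∑ j ∈ Finset.Icc 1 n, ((y : ℚ) ^ p) ^ j / j) / p +
          (y : ℚ) ^ n * (∑ j ∈ Finset.Icc 1 k, (y : ℚ) ^ j / j) +
          (((y : ℚ) ^ n - 1) / ((y : ℚ) - 1)) *
            (∑ j ∈ Finset.Icc 1 (p - 1), (y : ℚ) ^ j / j))) : ℚ) : ℚ_[p])‖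
      ≤ (p : ℝ) ^ (-1 : ℤ) := by
  have hp0 := (Fact.out : p.Prime).pos
  have hy : (y : ℚ) ≠ 1 := fun h => hy1 (by rw [show y = 1 by exact_mod_cast h])
  have hmult := fun i (hi : i ∈ Icc 1 n) =>
    Padic.norm_pow_prime_mul_div_sub_le_inv (p := p) y (Nat.one_le_iff_ne_zero.mp (mem_Icc.mp hi).1)
  have hblock := fun q r (hr : r ∈ Icc 1 (p - 1)) =>
    Padic.norm_pow_prime_div_sub_le_inv (p := p) y q
      (Nat.not_dvd_of_pos_of_lt (mem_Icc.mp hr).1 (Nat.lt_of_le_pred hp0 (mem_Icc.mp hr).2))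
  have htail := fun r (hr : r ∈ Icc 1 k) => hblock n r (Icc_subset_Icc_right hk hr)
  convert Padic.norm_ratCast_add_le_inv (Padic.norm_ratCast_sum_le_inv hmult)
    (Padic.norm_ratCast_add_le_inv
      (Padic.norm_ratCast_sum_le_inv fun q _ => Padic.norm_ratCast_sum_le_inv (hblock q))
      (Padic.norm_ratCast_sum_le_inv htail)) using 3
  rw [sum_Icc_one_mul_add hp0, ← geom_sum_eq hy, sum_mul_sum]
  simp only [sum_sub_distrib, sum_div, mul_sum, div_div]
  push_cast
  ring

theorem Gn_recurrence (p : ℕ) [Fact p.Prime] (hp : Odd p) (y : ℤ)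
    (hy : IsCoprime y (p : ℤ)) (hy1 : ¬ y ≡ 1 [ZMOD p]) (n k : ℕ) (hk : k ≤ p - 1) :
    ‖((((∑ j ∈ Finset.Icc 1 (p * n + k), ((y : ℚ) ^ p) ^ j / j) -
        ((∑ j ∈ Finset.Icc 1 n, ((y : ℚ) ^ p) ^ j / j) / p +
          (y : ℚ) ^ n * (∑ j ∈ Finset.Icc 1 k, (y : ℚ) ^ j / j) +
          (((y : ℚ) ^ n - 1) / ((y : ℚ) - 1)) *
            (∑ j ∈ Finset.Icc 1 (p - 1), (y : ℚ) ^ j / j))) : ℚ) : ℚ_[p])‖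
      ≤ (p : ℝ) ^ (-1 : ℤ) :=
  Gn_recurrence_general p y hy1 n k hk
end

section
/- Let p be an odd prime. Then p divides the numerator of Σ_{j=1}^{p−1} 2^j/j if and only if p is a Wieferich prime, i.e., 2^(p−1) ≡ 1 (mod p²). -/
/-!
For `0 < j < p` one has `j * C(p, j) = p * C(p - 1, j - 1)` and `C(p - 1, j - 1) ≡ (-1) ^ (j - 1)`
mod `p`, so `(-2) ^ j * C(p, j) / p ≡ -2 ^ j / j` mod `p`. Summing over `j` and using the binomial
theorem, `∑ 2 ^ j / j ≡ -(2 ^ p - 2) / p` mod `p`, and `p ∣ (2 ^ p - 2) / p` is the Wieferich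
condition.
-/

open Finset

theorem Nat.Prime.cast_choose_pred_eq_neg_one_pow {p k : ℕ} (hp : p.Prime) (hk : k < p) :
    ((p - 1).choose k : ZMod p) = (-1) ^ k := by
  induction k with
  | zero => simp
  | succ k ih =>
    have hpascal : p.choose (k + 1) = (p - 1).choose k + (p - 1).choose (k + 1) := by
      rw [← Nat.choose_succ_succ', Nat.sub_add_cancel hp.one_le]
    have hdvd : (p.choose (k + 1) : ZMod p) = 0 :=
      (ZMod.natCast_eq_zero_iff _ _).mpr (hp.dvd_choose_self k.succ_ne_zero hk)
    rw [hpascal, Nat.cast_add, ih (by omega)] at hdvd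
    rw [pow_succ]
    linear_combination hdvd

theorem Nat.Prime.sq_dvd_add_neg_one_pow_mul_choose {p j : ℕ} (hp : p.Prime) (hj0 : 0 < j)
    (hjp : j < p) : (p : ℤ) ^ 2 ∣ p + (-1) ^ j * j * p.choose j := by
  obtain ⟨i, rfl⟩ : ∃ i, j = i + 1 := ⟨j - 1, by omega⟩
  have hmul : (i + 1) * p.choose (i + 1) = p * (p - 1).choose i := by
    have := Nat.add_one_mul_choose_eq (p - 1) i
    rw [Nat.sub_add_cancel hp.one_le] at this
    rw [this, mul_comm]
  have hfactor : (p : ℤ) + (-1) ^ (i + 1) * (i + 1 : ℕ) * p.choose (i + 1)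
      = p * (1 - (-1) ^ i * (p - 1).choose i) := by
    rw [mul_assoc, ← Nat.cast_mul, hmul]; push_cast; ring
  rw [hfactor, sq]
  refine mul_dvd_mul_left _ ((ZMod.intCast_zmod_eq_zero_iff_dvd _ _).mp ?_)
  push_cast
  rw [hp.cast_choose_pred_eq_neg_one_pow (by omega), ← pow_add, ← two_mul, pow_mul]
  norm_num

theorem sum_Icc_pow_mul_choose {R : Type*} [CommRing R] (x : R) {n : ℕ} (hn : n ≠ 0) :
    ∑ j ∈ Icc 1 (n - 1), x ^ j * n.choose j = (x + 1) ^ n - 1 - x ^ n := by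
  obtain ⟨m, rfl⟩ : ∃ m, n = m + 1 := ⟨n - 1, by omega⟩
  rw [add_pow, sum_range_succ, sum_range_succ', Nat.add_sub_cancel,
    show Icc 1 m = Ico (0 + 1) (m + 1) from rfl, ← sum_Ico_add', ← range_eq_Ico]
  simp only [one_pow, mul_one, pow_zero, Nat.choose_zero_right, Nat.choose_self, Nat.cast_one]
  ring

theorem IsUltrametricDist.norm_le_iff_of_norm_add_le {E : Type*} [SeminormedAddCommGroup E]
    [IsUltrametricDist E] {x y : E} {r : ℝ} (h : ‖x + y‖ ≤ r) : ‖x‖ ≤ r ↔ ‖y‖ ≤ r := by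
  have key : ∀ {x y : E}, ‖x + y‖ ≤ r → ‖y‖ ≤ r → ‖x‖ ≤ r := fun {x y} h hy => by
    simpa using (norm_add_le_max (x + y) (-y)).trans (max_le h (by rwa [norm_neg]))
  exact ⟨fun hx => key (by rwa [add_comm]) hx, key h⟩

theorem Nat.two_pow_pred_modEq_one_iff {m n : ℕ} (hm : Odd m) (hn : n ≠ 0) :
    2 ^ (n - 1) ≡ 1 [MOD m] ↔ (m : ℤ) ∣ 2 ^ n - 2 := by
  have hcop : IsCoprime (m : ℤ) 2 := Nat.isCoprime_iff_coprime.mpr (Nat.coprime_two_right.mpr hm)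
  have hfactor : (2 : ℤ) ^ n - 2 = (2 ^ (n - 1) - 1) * 2 := by
    rw [sub_mul, ← pow_succ, Nat.sub_add_cancel (by omega)]; ring
  rw [Nat.ModEq.comm, Nat.modEq_iff_dvd, hfactor]
  push_cast
  exact ⟨fun h => h.mul_right 2, hcop.dvd_of_dvd_mul_right⟩

namespace Padic

variable {p : ℕ} [hp : Fact p.Prime]

theorem norm_intCast_div_le_inv_iff (m : ℤ) : ‖(m : ℚ_[p]) / p‖ ≤ (p : ℝ)⁻¹ ↔ (p : ℤ) ^ 2 ∣ m := by
  have hp0 : (0 : ℝ) < p := by exact_mod_cast hp.out.pos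
  rw [norm_div, norm_p, div_le_iff₀ (by positivity), ← norm_int_le_pow_iff_dvd]
  norm_num [zpow_neg, sq]

theorem norm_pow_div_add_neg_pow_mul_choose_div_le {a : ℚ_[p]} (ha : ‖a‖ ≤ 1) {j : ℕ}
    (hj0 : 0 < j) (hjp : j < p) : ‖a ^ j / j + (-a) ^ j * p.choose j / p‖ ≤ (p : ℝ)⁻¹ := by
  have hterm : a ^ j / j + (-a) ^ j * p.choose j / p
      = a ^ j * ((p + (-1) ^ j * j * p.choose j : ℤ) : ℚ_[p]) / p / j := by
    have hj : (j : ℚ_[p]) ≠ 0 := Nat.cast_ne_zero.mpr hj0.ne'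
    have hp0 : (p : ℚ_[p]) ≠ 0 := Nat.cast_ne_zero.mpr hp.out.ne_zero
    field_simp
    push_cast
    ring
  have hnum := (norm_intCast_div_le_inv_iff _).mpr
    (hp.out.sq_dvd_add_neg_one_pow_mul_choose hj0 hjp)
  rw [hterm, mul_div_assoc, norm_div, norm_mul, norm_pow,
    norm_natCast_eq_one_iff.mpr (Nat.coprime_of_lt_prime hj0.ne' hjp hp.out), div_one]
  exact (mul_le_of_le_one_left (norm_nonneg _) (pow_le_one₀ (norm_nonneg _) ha)).trans hnum

theorem norm_sum_pow_div_add_le {a : ℚ_[p]} (ha : ‖a‖ ≤ 1) :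
    ‖∑ j ∈ Icc 1 (p - 1), a ^ j / j + ((1 - a) ^ p - 1 - (-a) ^ p) / p‖ ≤ (p : ℝ)⁻¹ := by
  rw [← neg_add_eq_sub a, ← sum_Icc_pow_mul_choose _ hp.out.ne_zero, sum_div, ← sum_add_distrib]
  refine IsUltrametricDist.norm_sum_le_of_forall_le_of_nonneg (by positivity) fun j hj => ?_
  rw [mem_Icc] at hj
  exact norm_pow_div_add_neg_pow_mul_choose_div_le ha (by omega) (by omega)

end Padic

theorem G_pred_two_wieferich (p : ℕ) [Fact p.Prime] (hp : Odd p) :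
    ‖(((∑ j ∈ Finset.Icc 1 (p - 1), (2 : ℚ) ^ j / j) : ℚ) : ℚ_[p])‖ ≤ (p : ℝ) ^ (-1 : ℤ) ↔
      2 ^ (p - 1) ≡ 1 [MOD p ^ 2] := by
  have hsum := Padic.norm_sum_pow_div_add_le (p := p) (a := 2)
    (by simpa using IsUltrametricDist.norm_natCast_le_one ℚ_[p] 2)
  have hbinom : (1 - 2 : ℚ_[p]) ^ p - 1 - (-2) ^ p = ((2 ^ p - 2 : ℤ) : ℚ_[p]) := by
    rw [hp.neg_pow, show (1 - 2 : ℚ_[p]) = -1 by norm_num, hp.neg_one_pow]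
    push_cast
    ring
  rw [hbinom] at hsum
  push_cast
  rw [zpow_neg_one, IsUltrametricDist.norm_le_iff_of_norm_add_le hsum,
    Padic.norm_intCast_div_le_inv_iff, Nat.two_pow_pred_modEq_one_iff hp.pow hp.pos.ne',
    Nat.cast_pow]
end

section
/- For every integer r ≥ 0 and every x ≠ 1 in a field of characteristic zero, Σ_{j=1}^n j^r x^j = Li_{−r}(x) − x^n · Σ_{m=0}^r C(r,m) n^m Li_{−(r−m)}(x), where Li_{−r}(x) := −δ_{r,0} + Σ_{j=0}^r j! S(r,j) x^j/(1−x)^(j+1) and S(r,j) are Stirling numbers of the second kind. -/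
/-- Stirling numbers of the second kind. -/
def stirling2 : ℕ → ℕ → ℕ
  | 0, 0 => 1
  | 0, _ + 1 => 0
  | _ + 1, 0 => 0
  | r + 1, j + 1 => (j + 1) * stirling2 r (j + 1) + stirling2 r j

/-- The closed form for the polylogarithm of negative integer order `Li_{-r}(x)`. -/
noncomputable def negLi {K : Type*} [Field K] (r : ℕ) (x : K) : K :=
  -(if r = 0 then 1 else 0) +
    ∑ j ∈ Finset.range (r + 1),
      (j.factorial : K) * (stirling2 r j : K) * x ^ j / (1 - x) ^ (j + 1)

/-!
As formal power series, `Li_{-r}(x) = ∑_{k ≥ 1} k ^ r x ^ k`, and the claim says that the tail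
`∑_{k > n} k ^ r x ^ k = x ^ n ∑_{k ≥ 1} (n + k) ^ r x ^ k` is `x ^ n` times the Appell polynomial
`∑_m C(r, m) n ^ m Li_{-(r-m)}(x)`. Algebraically, everything rests on the recursion
`x ∑_m C(r, m) Li_{-m}(x) = Li_{-r}(x) - x`: in the variable `y = x / (1 - x)` it is an identity
between the Fubini polynomials `∑_j j! S(r, j) y ^ j`, which follows from
`S(r + 1, j + 1) = ∑_s C(r, s) S(s, j)`. The addition formula for Appell polynomials turns the
recursion into the step `n → n + 1` of an induction on `n`.
-/

open Finset Nat

theorem stirling2_eq_stirlingSecond : stirling2 = stirlingSecond := by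
  funext r j
  induction r generalizing j with
  | zero => cases j <;> rfl
  | succ r ih => cases j <;> simp [stirling2, stirlingSecond_succ_succ, ih]

theorem Nat.stirlingSecond_succ_succ_eq_sum_choose (r j : ℕ) :
    stirlingSecond (r + 1) (j + 1) = ∑ s ∈ range (r + 1), r.choose s * stirlingSecond s j := by
  induction r generalizing j with
  | zero => simp [stirlingSecond_succ_succ]
  | succ r ih =>
    have pascal := sum_choose_succ_mul (R := ℕ) (fun s _ => stirlingSecond s j) r
    simp only [Nat.cast_id] at pascal
    rw [pascal, ← ih]
    cases j with
    | zero => simp [stirlingSecond_succ_succ]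
    | succ j =>
      simp only [stirlingSecond_succ_succ, mul_add, sum_add_distrib, mul_left_comm _ (j + 1),
        ← mul_sum, ← ih]
      ring

section Fubini

variable {R : Type*} [CommSemiring R]

def fubiniPoly (r : ℕ) (y : R) : R :=
  ∑ j ∈ range (r + 1), (j ! : R) * stirlingSecond r j * y ^ j

theorem fubiniPoly_eq_sum_range {r N : ℕ} (h : r < N) (y : R) :
    fubiniPoly r y = ∑ j ∈ range N, (j ! : R) * stirlingSecond r j * y ^ j := by
  refine sum_subset (range_subset_range.2 h) fun j _ hj => ?_
  rw [stirlingSecond_eq_zero_of_lt (by simpa using hj)]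
  simp

theorem one_add_mul_fubiniPoly (r : ℕ) (y : R) :
    (1 + y) * fubiniPoly r y =
      y * ∑ s ∈ range (r + 1), (r.choose s : R) * fubiniPoly s y + stirlingSecond r 0 := by
  have hshift : fubiniPoly r y =
      ∑ j ∈ range (r + 1), ((j + 1) ! : R) * stirlingSecond r (j + 1) * y ^ (j + 1) +
        stirlingSecond r 0 := by
    rw [fubiniPoly_eq_sum_range (by omega : r < r + 2) y, sum_range_succ']
    simp
  have hconv : y * ∑ s ∈ range (r + 1), (r.choose s : R) * fubiniPoly s y =
      ∑ j ∈ range (r + 1), ((j + 1) ! : R) * stirlingSecond r (j + 1) * y ^ (j + 1) +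
        y * fubiniPoly r y := by
    calc y * ∑ s ∈ range (r + 1), (r.choose s : R) * fubiniPoly s y
        = ∑ s ∈ range (r + 1), ∑ j ∈ range (r + 1),
            y * ((r.choose s : R) * ((j ! : R) * stirlingSecond s j * y ^ j)) := by
          rw [mul_sum]
          refine sum_congr rfl fun s hs => ?_
          rw [fubiniPoly_eq_sum_range (mem_range.1 hs), mul_sum, mul_sum]
      _ = ∑ j ∈ range (r + 1), (j ! : R) * stirlingSecond (r + 1) (j + 1) * y ^ (j + 1) := by
          rw [sum_comm]
          refine sum_congr rfl fun j _ => ?_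
          rw [stirlingSecond_succ_succ_eq_sum_choose]
          push_cast
          rw [mul_sum, sum_mul]
          exact sum_congr rfl fun s _ => by ring
      _ = _ := by
          rw [fubiniPoly, mul_sum, ← sum_add_distrib]
          refine sum_congr rfl fun j _ => ?_
          rw [stirlingSecond_succ_succ, factorial_succ]
          push_cast
          ring
  rw [hconv, add_mul, one_mul]
  nth_rw 1 [hshift]
  ring

end Fubini

section Appell

variable {R : Type*} [CommSemiring R]

def appell (a : ℕ → R) (r : ℕ) (t : R) : R :=
  ∑ m ∈ range (r + 1), (r.choose m : R) * t ^ m * a (r - m)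

theorem appell_zero_right (a : ℕ → R) (r : ℕ) : appell a r 0 = a r := by
  rw [appell, sum_range_succ']
  simp

theorem appell_one_right (a : ℕ → R) (r : ℕ) :
    appell a r 1 = ∑ m ∈ range (r + 1), (r.choose m : R) * a m := by
  rw [appell, ← sum_range_reflect]
  refine sum_congr rfl fun m hm => ?_
  have hm : m ≤ r := by simpa [Nat.lt_succ_iff] using hm
  rw [one_pow, mul_one, add_tsub_cancel_right, choose_symm (by omega), Nat.sub_sub_self hm]

theorem appell_add (a : ℕ → R) (r : ℕ) (s t : R) :
    appell a r (s + t) = appell (fun n => appell a n s) r t := by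
  calc appell a r (s + t)
      = ∑ m ∈ range (r + 1), ∑ i ∈ range (m + 1),
          (r.choose m * m.choose i : R) * t ^ i * s ^ (m - i) * a (r - m) := by
        refine sum_congr rfl fun m _ => ?_
        rw [add_comm s t, add_pow, mul_sum, sum_mul]
        exact sum_congr rfl fun i _ => by ring
    _ = ∑ i ∈ range (r + 1), ∑ m ∈ Ico i (r + 1),
          (r.choose m * m.choose i : R) * t ^ i * s ^ (m - i) * a (r - m) :=
        sum_comm' fun m i => by simp only [mem_range, mem_Ico]; omega
    _ = ∑ i ∈ range (r + 1), ∑ k ∈ range (r - i + 1),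
          (r.choose i * (r - i).choose k : R) * t ^ i * s ^ k * a (r - i - k) := by
        refine sum_congr rfl fun i hi => ?_
        have hi : i ≤ r := by simpa [Nat.lt_succ_iff] using hi
        rw [sum_Ico_eq_sum_range, show r + 1 - i = r - i + 1 by omega]
        refine sum_congr rfl fun k _ => ?_
        rw [← Nat.cast_mul, ← Nat.cast_mul, choose_mul (Nat.le_add_right i k),
          add_tsub_cancel_left, Nat.sub_sub]
    _ = appell (fun n => appell a n s) r t := by
        simp only [appell, mul_sum]
        exact sum_congr rfl fun i _ => sum_congr rfl fun k _ => by ring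

end Appell

section NegLi

variable {K : Type*} [Field K]

theorem negLi_eq_fubiniPoly (r : ℕ) (x : K) :
    negLi r x = fubiniPoly r (x / (1 - x)) / (1 - x) - stirlingSecond r 0 := by
  have hδ : (if r = 0 then 1 else 0 : K) = stirlingSecond r 0 := by
    cases r <;> simp
  rw [negLi, fubiniPoly, stirling2_eq_stirlingSecond, sum_div, ← hδ, neg_add_eq_sub]
  congr 1
  refine sum_congr rfl fun j _ => ?_
  rw [mul_div_assoc, mul_div_assoc, div_pow, div_div, ← pow_succ]

theorem mul_sum_choose_mul_negLi {x : K} (hx : x ≠ 1) (r : ℕ) :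
    x * ∑ m ∈ range (r + 1), (r.choose m : K) * negLi m x = negLi r x - x := by
  have hu : 1 - x ≠ 0 := sub_ne_zero.2 hx.symm
  have hδ : ∑ m ∈ range (r + 1), (r.choose m : K) * stirlingSecond m 0 = 1 := by
    rw [sum_range_succ']
    simp
  have hy : 1 + x / (1 - x) = 1 / (1 - x) := by
    field_simp
    ring
  have key := one_add_mul_fubiniPoly r (x / (1 - x))
  rw [hy] at key
  simp only [negLi_eq_fubiniPoly, mul_sub, sum_sub_distrib, hδ, ← mul_div_assoc, ← sum_div]
  linear_combination -key

theorem mul_appell_negLi_add_one {x : K} (hx : x ≠ 1) (r : ℕ) (t : K) :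
    x * appell (negLi · x) r (t + 1) = appell (negLi · x) r t - x * (t + 1) ^ r := by
  rw [add_comm t 1, appell_add, add_comm 1 t, appell, appell, add_pow, mul_sum, mul_sum,
    ← sum_sub_distrib]
  refine sum_congr rfl fun m _ => ?_
  have h := mul_sum_choose_mul_negLi hx (r - m)
  rw [← appell_one_right] at h
  linear_combination (r.choose m * t ^ m : K) * h

end NegLi

theorem truncated_polylog_formula_general {K : Type*} [Field K]
    (r : ℕ) (x : K) (hx : x ≠ 1) (n : ℕ) :
    ∑ j ∈ Finset.Icc 1 n, (j : K) ^ r * x ^ j =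
      negLi r x - x ^ n * ∑ m ∈ Finset.range (r + 1),
        (r.choose m : K) * (n : K) ^ m * negLi (r - m) x := by
  change _ = negLi r x - x ^ n * appell (negLi · x) r n
  induction n with
  | zero => simp [appell_zero_right]
  | succ n ih =>
    rw [sum_Icc_succ_top (by omega), ih]
    push_cast
    linear_combination x ^ n * mul_appell_negLi_add_one hx r n

theorem truncated_polylog_formula {K : Type*} [Field K] [CharZero K]
    (r : ℕ) (x : K) (hx : x ≠ 1) (n : ℕ) :
    ∑ j ∈ Finset.Icc 1 n, (j : K) ^ r * x ^ j =
      negLi r x - x ^ n * ∑ m ∈ Finset.range (r + 1),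
        (r.choose m : K) * (n : K) ^ m * negLi (r - m) x :=
  truncated_polylog_formula_general r x hx n
end

section
/- Let p ≠ 5 be a prime. Then for all s ≥ 1 and j ≥ 1, the Fibonacci numbers satisfy F_{p^s · j} ≡ (p/5) · F_{p^(s−1) · j} (mod p^s), where (p/5) is the Legendre symbol. -/
/-!
In `ℤ[φ] = ℤ[ω]/(ω² - ω - 1)` one has `ω ^ n = F (n - 1) + F n • ω`, so `F n` is the
`ω`-coordinate of `ω ^ n`. Modulo an odd prime `p`, `√5 = 2ω - 1` satisfies
`√5 ^ p = 5 ^ ((p - 1) / 2) • √5 = (p/5) • √5` by Euler's criterion and quadratic reciprocity, so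
Frobenius sends `ω = (1 + √5) / 2` to `(1 + (p/5) √5) / 2`: to `ω`, to its conjugate `1 - ω`, or
to the constant `1 / 2`. In each case `ω ^ p ≡ c (mod p)` for some `c ∈ ℤ[φ]` whose powers have
`ω`-coordinate `(p/5) • F n` (and `p = 2` is checked by hand). Raising `ω ^ p ≡ c` to the power
`p ^ (s - 1) * j` gives a congruence modulo `p ^ s`, and comparing `ω`-coordinates gives the claim.
-/

instance : Fact (Nat.Prime 5) := ⟨by norm_num⟩

open QuadraticAlgebra

local notation "ℤ[φ]" => QuadraticAlgebra ℤ 1 1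

section Fibonacci

variable {R : Type*}

theorem omega_pow_succ [CommSemiring R] (n : ℕ) :
    (ω : QuadraticAlgebra R 1 1) ^ (n + 1) = ⟨Nat.fib n, Nat.fib (n + 1)⟩ := by
  induction n with
  | zero => ext <;> simp
  | succ n ih =>
    rw [pow_succ, ih]
    ext <;> simp [Nat.fib_add_two]

theorem im_omega_pow [CommSemiring R] (n : ℕ) :
    ((ω : QuadraticAlgebra R 1 1) ^ n).im = Nat.fib n := by
  cases n with
  | zero => simp
  | succ n => rw [omega_pow_succ]

theorem im_star_omega_pow [CommRing R] (n : ℕ) :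
    ((star ω : QuadraticAlgebra R 1 1) ^ n).im = -Nat.fib n := by
  rw [← star_pow, im_star, im_omega_pow]

end Fibonacci

theorem natCast_pow_succ_dvd_pow_sub_pow {R : Type*} [CommRing R] {p : ℕ} {x c : R}
    (h : (p : R) ∣ x ^ p - c) (s j : ℕ) :
    (p : R) ^ (s + 1) ∣ x ^ (p ^ (s + 1) * j) - c ^ (p ^ s * j) := by
  have h' := dvd_sub_pow_of_dvd_sub h s
  rw [← pow_mul, ← pow_succ'] at h'
  rw [pow_mul, pow_mul]
  exact h'.trans (sub_dvd_pow_sub_pow _ _ j)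

namespace QuadraticAlgebra

instance {R : Type*} [CommRing R] {a b : R} (p : ℕ) [CharP R p] :
    CharP (QuadraticAlgebra R a b) p :=
  charP_of_injective_algebraMap algebraMap_injective p

variable (p : ℕ)

def reduceMod : ℤ[φ] →ₐ[ℤ] QuadraticAlgebra (ZMod p) 1 1 :=
  lift ⟨ω, by ext <;> simp⟩

@[simp] theorem reduceMod_apply (z : ℤ[φ]) : reduceMod p z = ⟨z.re, z.im⟩ := by
  ext <;> simp [reduceMod]

@[simp] theorem reduceMod_omega : reduceMod p ω = ω := by
  ext <;> simp

theorem reduceMod_eq_zero_iff {z : ℤ[φ]} : reduceMod p z = 0 ↔ (p : ℤ[φ]) ∣ z := by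
  rw [← map_natCast (algebraMap ℤ _), algebraMap_dvd_iff]
  simp [QuadraticAlgebra.ext_iff, ZMod.intCast_zmod_eq_zero_iff_dvd]

end QuadraticAlgebra

section Frobenius

variable {p : ℕ} [Fact p.Prime]

theorem two_mul_omega_pow_prime (hp2 : p ≠ 2) :
    (2 : QuadraticAlgebra (ZMod p) 1 1) * ω ^ p =
      1 + (legendreSym 5 p : QuadraticAlgebra (ZMod p) 1 1) * (2 * ω - 1) := by
  set u : QuadraticAlgebra (ZMod p) 1 1 := 2 * ω - 1
  have hu : u ^ 2 = 5 := by ext <;> simp [u, pow_two] <;> norm_num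
  have hp_odd : p = 2 * (p / 2) + 1 := by
    have := (Fact.out : p.Prime).eq_two_or_odd; omega
  have h2 : (2 : QuadraticAlgebra (ZMod p) 1 1) ^ p = 2 := by
    rw [← map_ofNat (algebraMap (ZMod p) (QuadraticAlgebra (ZMod p) 1 1)), ← map_pow,
      ZMod.pow_card]
  have h5 : ((legendreSym 5 p : ℤ) : QuadraticAlgebra (ZMod p) 1 1) = 5 ^ (p / 2) := by
    rw [← legendreSym.quadratic_reciprocity_one_mod_four (p := 5) (by norm_num) hp2,
      ← map_intCast (algebraMap (ZMod p) (QuadraticAlgebra (ZMod p) 1 1)), legendreSym.eq_pow]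
    simp [map_ofNat]
  have hfrob : u ^ p = 2 * ω ^ p - 1 := by
    rw [sub_pow_char, mul_pow, h2, one_pow]
  have heuler : u ^ p = 5 ^ (p / 2) * u := by
    rw [congrArg (u ^ ·) hp_odd, pow_succ, pow_mul, hu]
  rw [h5]
  linear_combination -hfrob + heuler

theorem natCast_dvd_omega_pow_sub (hp2 : p ≠ 2) {c : ℤ[φ]}
    (hc : 2 * reduceMod p c =
      1 + (legendreSym 5 p : QuadraticAlgebra (ZMod p) 1 1) * (2 * ω - 1)) :
    (p : ℤ[φ]) ∣ ω ^ p - c := by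
  have h2 : IsUnit (2 : QuadraticAlgebra (ZMod p) 1 1) := by
    have h : (2 : ZMod p) ≠ 0 := Ring.two_ne_zero (by rwa [ZMod.ringChar_zmod_n])
    rw [← map_ofNat (algebraMap (ZMod p) (QuadraticAlgebra (ZMod p) 1 1))]
    exact h.isUnit.map _
  rw [← reduceMod_eq_zero_iff, map_sub, sub_eq_zero]
  refine h2.mul_left_cancel ?_
  rw [hc, map_pow, reduceMod_omega, two_mul_omega_pow_prime hp2]

end Frobenius

theorem exists_natCast_dvd_omega_pow_sub {p : ℕ} (hp : p.Prime) :
    ∃ c : ℤ[φ], (p : ℤ[φ]) ∣ ω ^ p - c ∧ ∀ n, (c ^ n).im = legendreSym 5 p * Nat.fib n := by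
  rcases hp.eq_two_or_odd' with rfl | hodd
  · refine ⟨star ω, ⟨ω, by ext <;> simp [pow_two]⟩, fun n => ?_⟩
    rw [im_star_omega_pow, Nat.cast_ofNat, show legendreSym 5 2 = -1 by decide, neg_one_mul]
  have : Fact p.Prime := ⟨hp⟩
  have hp2 : p ≠ 2 := hodd.ne_two_of_dvd_nat dvd_rfl
  rcases eq_or_ne (legendreSym 5 p) 0 with h0 | h0
  · -- `p / 2 + 1` is `1 / 2` modulo `p`
    refine ⟨((p / 2 + 1 : ℕ) : ℤ[φ]), natCast_dvd_omega_pow_sub hp2 ?_, fun n => ?_⟩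
    · have : 2 * (p / 2 + 1) = p + 1 := by have := Nat.odd_iff.mp hodd; omega
      rw [h0, map_natCast, ← Nat.cast_ofNat, ← Nat.cast_mul, this, Nat.cast_add,
        CharP.cast_eq_zero, zero_add, Nat.cast_one, Int.cast_zero, zero_mul, add_zero]
    · rw [h0, zero_mul, ← Nat.cast_pow, im_natCast]
  rcases legendreSym.eq_one_or_neg_one 5 ((legendreSym.eq_zero_iff _ _).not.mp h0) with h1 | h1
  · refine ⟨ω, natCast_dvd_omega_pow_sub hp2 ?_, fun n => ?_⟩
    · rw [h1, reduceMod_omega]; ring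
    · rw [h1, one_mul, im_omega_pow]
  · refine ⟨star ω, natCast_dvd_omega_pow_sub hp2 ?_, fun n => ?_⟩
    · rw [h1]
      ext <;> simp; ring
    · rw [h1, im_star_omega_pow, neg_one_mul]

theorem fib_pow_prime_congr_general (p : ℕ) (hp : p.Prime) :
    ∀ s : ℕ, 1 ≤ s → ∀ j : ℕ, 1 ≤ j →
      (Nat.fib (p ^ s * j) : ℤ) ≡
        legendreSym 5 p * (Nat.fib (p ^ (s - 1) * j) : ℤ) [ZMOD (p : ℕ) ^ s] := by
  rintro (_ | s) hs j -
  · omega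
  obtain ⟨c, hc, hc_im⟩ := exists_natCast_dvd_omega_pow_sub hp
  have h := natCast_pow_succ_dvd_pow_sub_pow hc s j
  rw [← map_natCast (algebraMap ℤ ℤ[φ]), ← map_pow, algebraMap_dvd_iff, im_sub, im_omega_pow,
    hc_im] at h
  rw [Nat.add_sub_cancel]
  exact (Int.modEq_iff_dvd.mpr (by exact_mod_cast h.2)).symm

theorem fib_pow_prime_congr (p : ℕ) (hp : p.Prime) (hp5 : p ≠ 5) :
    ∀ s : ℕ, 1 ≤ s → ∀ j : ℕ, 1 ≤ j →
      (Nat.fib (p ^ s * j) : ℤ) ≡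
        legendreSym 5 p * (Nat.fib (p ^ (s - 1) * j) : ℤ) [ZMOD (p : ℕ) ^ s] :=
  fib_pow_prime_congr_general p hp
end

section
/- For every n ≥ 1, Σ_{j=1}^{4n} F_j/j ≡ 0 (mod 5) in the 5-adic sense; that is, ν_5(Σ_{j=1}^{4n} F_j/j) ≥ 1, where F_j are Fibonacci numbers. -/
open Nat Real

theorem Nat.fib_five_mul (n : ℕ) :
    (fib (5 * n) : ℤ) = 5 * fib n * (5 * fib n ^ 2 * (fib n ^ 2 + (-1) ^ n) + 1) := by
  suffices h : (fib (5 * n) : ℝ) = 5 * fib n * (5 * fib n ^ 2 * (fib n ^ 2 + (-1) ^ n) + 1) by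
    exact_mod_cast h
  have hab : goldenRatio ^ n * goldenConj ^ n = (-1) ^ n := by
    rw [← mul_pow, goldenRatio_mul_goldenConj]
  have hsign : ((-1 : ℝ) ^ n) ^ 2 = 1 := by rw [← pow_mul, mul_comm, pow_mul]; norm_num
  have h5 : √5 ^ 2 = 5 := Real.sq_sqrt (by norm_num)
  have hdiff : goldenRatio ^ n - goldenConj ^ n = √5 * fib n := by
    rw [coe_fib_eq]; field_simp
  rw [coe_fib_eq (5 * n), pow_mul', pow_mul', ← hab]
  rw [← hab] at hsign
  generalize goldenRatio ^ n = a, goldenConj ^ n = b, (fib n : ℝ) = x at *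
  calc (a ^ 5 - b ^ 5) / √5
      = (a - b) * ((a - b) ^ 4 + 5 * (a * b) * (a - b) ^ 2 + 5 * (a * b) ^ 2) / √5 := by ring
    _ = x * ((√5 ^ 2) ^ 2 * x ^ 4 + 5 * (a * b) * √5 ^ 2 * x ^ 2 + 5 * (a * b) ^ 2) := by
      rw [hdiff]; field_simp
    _ = 5 * x * (5 * x ^ 2 * (x ^ 2 + a * b) + 1) := by rw [h5, hsign]; ring

theorem Nat.cast_fib_zmod_five : ∀ j : ℕ, (fib j : ZMod 5) = j * 3 ^ (j - 1)
  | 0 => rfl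
  | 1 => rfl
  | 2 => rfl
  | k + 3 => by
    have h5 : (5 : ZMod 5) = 0 := rfl
    rw [fib_add_two, Nat.cast_add, cast_fib_zmod_five (k + 1), cast_fib_zmod_five (k + 2)]
    simp only [Nat.add_sub_cancel, show k + 2 - 1 = k + 1 by omega,
      show k + 3 - 1 = k + 2 by omega]
    push_cast
    linear_combination (-(k : ZMod 5) - 4) * 3 ^ k * h5

theorem sum_range_four_mul_three_pow_zmod_five (n : ℕ) :
    ∑ i ∈ Finset.range (4 * n), (3 : ZMod 5) ^ i = 0 := by
  have h := geom_sum_mul (3 : ZMod 5) (4 * n)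
  rw [pow_mul, show (3 : ZMod 5) ^ 4 = 1 from rfl, one_pow, sub_self] at h
  calc ∑ i ∈ Finset.range (4 * n), (3 : ZMod 5) ^ i
      = (∑ i ∈ Finset.range (4 * n), (3 : ZMod 5) ^ i) * ((3 - 1) * 3) := by
        rw [show ((3 : ZMod 5) - 1) * 3 = 1 from rfl, mul_one]
    _ = 0 := by rw [← mul_assoc, h, zero_mul]

namespace Padic
variable {p : ℕ} [Fact p.Prime]

theorem norm_intCast_le_inv_iff {k : ℤ} :
    ‖(k : ℚ_[p])‖ ≤ (p : ℝ)⁻¹ ↔ (k : ZMod p) = 0 := by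
  rw [ZMod.intCast_zmod_eq_zero_iff_dvd, ← pow_one (p : ℤ), ← norm_int_le_pow_iff_dvd]
  simp

theorem norm_natCast_sub_natCast_le_inv_of_zmod_eq {a b : ℕ} (h : (a : ZMod p) = b) :
    ‖(a - b : ℚ_[p])‖ ≤ (p : ℝ)⁻¹ := by
  have := (norm_intCast_le_inv_iff (p := p) (k := a - b)).2 (by push_cast; rw [h, sub_self])
  exact_mod_cast this

end Padic

open IsUltrametricDist

theorem norm_fib_div_sub_three_pow_le_of_not_dvd {j : ℕ} (hj : ¬ 5 ∣ j) :
    ‖(fib j : ℚ_[5]) / j - 3 ^ (j - 1)‖ ≤ 5⁻¹ := by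
  have hj1 : ‖(j : ℚ_[5])‖ = 1 :=
    Padic.norm_natCast_eq_one_iff.2 ((Nat.Prime.coprime_iff_not_dvd Fact.out).2 hj)
  have hj0 : (j : ℚ_[5]) ≠ 0 := norm_ne_zero_iff.1 (by rw [hj1]; exact one_ne_zero)
  have hsplit : (fib j : ℚ_[5]) / j - 3 ^ (j - 1) =
      ((fib j : ℕ) - (j * 3 ^ (j - 1) : ℕ)) / j := by
    push_cast; field_simp
  rw [hsplit, norm_div, hj1, div_one]
  exact_mod_cast Padic.norm_natCast_sub_natCast_le_inv_of_zmod_eq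
    (by push_cast; exact cast_fib_zmod_five j)

theorem norm_fib_five_mul_div_sub_le {m : ℕ} (hm : m ≠ 0)
    (hbound : ‖(fib m : ℚ_[5]) / m‖ ≤ 1) :
    ‖(fib (5 * m) : ℚ_[5]) / (5 * m : ℕ) - fib m / m‖ ≤ 5⁻¹ := by
  set t : ℤ := fib m ^ 2 * (fib m ^ 2 + (-1) ^ m)
  have hfib : (fib (5 * m) : ℚ_[5]) = 5 * fib m * (5 * t + 1) := by
    have h := congrArg (Int.cast : ℤ → ℚ_[5]) (fib_five_mul m)
    push_cast at h
    rw [h]; push_cast [t]; ring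
  have hm0 : (m : ℚ_[5]) ≠ 0 := Nat.cast_ne_zero.2 hm
  have hsplit : (fib (5 * m) : ℚ_[5]) / (5 * m : ℕ) - fib m / m = 5 * (fib m / m) * t := by
    rw [hfib]; push_cast; field_simp; ring
  rw [hsplit, norm_mul, norm_mul]
  calc ‖(5 : ℚ_[5])‖ * ‖(fib m : ℚ_[5]) / m‖ * ‖(t : ℚ_[5])‖
      ≤ ‖(5 : ℚ_[5])‖ * 1 * 1 := by
        gcongr; exact Padic.norm_int_le_one t
    _ = 5⁻¹ := by simpa using Padic.norm_p (p := 5)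

theorem norm_fib_div_sub_three_pow_le (j : ℕ) (hj : j ≠ 0) :
    ‖(fib j : ℚ_[5]) / j - 3 ^ (j - 1)‖ ≤ 5⁻¹ := by
  induction j using Nat.strong_induction_on with | _ j ih =>
  by_cases h5 : 5 ∣ j
  · obtain ⟨m, rfl⟩ := h5
    have hm : m ≠ 0 := by omega
    have ihm := ih m (by omega) hm
    have hbound : ‖(fib m : ℚ_[5]) / m‖ ≤ 1 := by
      rw [← sub_add_cancel ((fib m : ℚ_[5]) / m) (3 ^ (m - 1))]
      refine (norm_add_le_max _ _).trans (max_le (ihm.trans (by norm_num)) ?_)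
      exact_mod_cast Padic.norm_int_le_one (3 ^ (m - 1))
    have hpow : ‖(3 : ℚ_[5]) ^ (m - 1) - 3 ^ (5 * m - 1)‖ ≤ 5⁻¹ := by
      have h : ((3 ^ (m - 1) : ℕ) : ZMod 5) = (3 ^ (5 * m - 1) : ℕ) := by
        rw [show 5 * m - 1 = m - 1 + 4 * m by omega, pow_add, pow_mul]
        simp only [Nat.cast_mul, Nat.cast_pow, Nat.cast_ofNat]
        rw [show (3 : ZMod 5) ^ 4 = 1 from rfl, one_pow, mul_one]
      exact_mod_cast Padic.norm_natCast_sub_natCast_le_inv_of_zmod_eq h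
    have hsplit : (fib (5 * m) : ℚ_[5]) / (5 * m : ℕ) - 3 ^ (5 * m - 1) =
        ((fib (5 * m) : ℚ_[5]) / (5 * m : ℕ) - fib m / m)
          + ((fib m : ℚ_[5]) / m - 3 ^ (m - 1)) + ((3 : ℚ_[5]) ^ (m - 1) - 3 ^ (5 * m - 1)) := by
      ring
    rw [hsplit]
    refine (norm_add_le_max _ _).trans (max_le ((norm_add_le_max _ _).trans (max_le ?_ ihm)) hpow)
    exact norm_fib_five_mul_div_sub_le hm hbound
  · exact norm_fib_div_sub_three_pow_le_of_not_dvd h5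

theorem fib_harmonic_sum_mod_five_general (n : ℕ) :
    ‖(((∑ j ∈ Finset.Icc 1 (4 * n), (Nat.fib j : ℚ) / j) : ℚ) : ℚ_[5])‖ ≤
      (5 : ℝ) ^ (-1 : ℤ) := by
  have hgeom : ‖((∑ j ∈ Finset.Icc 1 (4 * n), 3 ^ (j - 1) : ℕ) : ℚ_[5])‖ ≤ 5⁻¹ := by
    have h : (((∑ j ∈ Finset.Icc 1 (4 * n), 3 ^ (j - 1) : ℕ) : ℤ) : ZMod 5) = 0 := by
      rw [Int.cast_natCast, ← Finset.Ico_add_one_right_eq_Icc, Finset.sum_Ico_eq_sum_range]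
      simpa using sum_range_four_mul_three_pow_zmod_five n
    exact_mod_cast Padic.norm_intCast_le_inv_iff.2 h
  have hsplit : (((∑ j ∈ Finset.Icc 1 (4 * n), (Nat.fib j : ℚ) / j) : ℚ) : ℚ_[5]) =
      ∑ j ∈ Finset.Icc 1 (4 * n), ((fib j : ℚ_[5]) / j - 3 ^ (j - 1))
        + ((∑ j ∈ Finset.Icc 1 (4 * n), 3 ^ (j - 1) : ℕ) : ℚ_[5]) := by
    push_cast; rw [Finset.sum_sub_distrib]; ring
  rw [hsplit, zpow_neg_one]
  refine (norm_add_le_max _ _).trans (max_le ?_ hgeom)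
  refine norm_sum_le_of_forall_le_of_nonneg (by norm_num) fun j hj => ?_
  exact norm_fib_div_sub_three_pow_le j (by simp at hj; omega)

theorem fib_harmonic_sum_mod_five (n : ℕ) (hn : 1 ≤ n) :
    ‖(((∑ j ∈ Finset.Icc 1 (4 * n), (Nat.fib j : ℚ) / j) : ℚ) : ℚ_[5])‖ ≤
      (5 : ℝ) ^ (-1 : ℤ) :=
  fib_harmonic_sum_mod_five_general n
end
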